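/- arXiv:2110.06992 — 2 statements merged into one kernel-verified Lean document; each statement's English description precedes it below -/
import Mathlib

section
/- Under the cluster dynamics, the inter-cluster variable e^y = y - 1_r x̄ satisfies ė^y = -P^{-1} L̃^E e^y - P^{-1} Uᵀ L^E e^x - γ(t) P^{-1} Uᵀ ∇F(x) + (γ(t)/N)(1_Nᵀ∇F(x)) 1_r, using that L̃^E 1_r = 0. -/
open Matrix Finset

/-- inter-cluster dynamics.  Under the cluster DCG dynamics, the
inter-cluster variable `e^y = y - 1_r x̄` satisfies
`ė^y = -P⁻¹ L̃^E e^y - P⁻¹ Uᵀ L^E e^x - γ(t) P⁻¹ Uᵀ ∇F(x) + (γ(t)/N)(1ᵀ∇F(x)) 1_r`,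
using that `L̃^E 1_r = 0`. -/
theorem inter_cluster_dynamics (N r : ℕ) (hN : 0 < N) (c : Fin N → Fin r)
    (hc : ∀ α, 0 < (univ.filter fun i => c i = α).card)
    (LI LE : Matrix (Fin N) (Fin N) ℝ)
    (U : Matrix (Fin N) (Fin r) ℝ)
    (hU : ∀ i α, U i α = if c i = α then 1 else 0)
    (hULI : Uᵀ * LI = 0)
    (hLE1 : LE.mulVec (fun _ => 1) = 0)
    (hcolI : ∀ j, ∑ i, LI i j = 0) (hcolE : ∀ j, ∑ i, LE i j = 0)
    (Pinv : Matrix (Fin r) (Fin r) ℝ)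
    (hPinv : Pinv = Matrix.diagonal fun α => (((univ.filter fun i => c i = α).card : ℝ))⁻¹)
    (Ltilde : Matrix (Fin r) (Fin r) ℝ) (hLt : Ltilde = Uᵀ * LE * U)
    (γ : ℝ → ℝ) (g : Fin N → ℝ → ℝ)
    (x x' : ℝ → Fin N → ℝ)
    (hdyn : ∀ t, x' t = -(LI + LE).mulVec (x t) - γ t • fun i => g i (x t i))
    (hx : ∀ t i, HasDerivAt (fun s => x s i) (x' t i) t)
    (y : ℝ → Fin r → ℝ) (hy : ∀ t, y t = (Pinv * Uᵀ).mulVec (x t))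
    (xbar : ℝ → ℝ) (hxbar : ∀ t, xbar t = (∑ i, x t i) / N)
    (ex : ℝ → Fin N → ℝ) (hex : ∀ t, ex t = x t - U.mulVec (y t))
    (ey : ℝ → Fin r → ℝ) (hey : ∀ t, ey t = fun α => y t α - xbar t) :
    ∀ t α, HasDerivAt (fun s => ey s α)
      ((-(Pinv * Ltilde).mulVec (ey t) - (Pinv * Uᵀ * LE).mulVec (ex t)
        - γ t • (Pinv * Uᵀ).mulVec (fun j => g j (x t j))
        + (γ t / N * ∑ i, g i (x t i)) • (fun _ : Fin r => (1:ℝ))) α) t := by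
  intro t α
  set gv : Fin N → ℝ := fun j => g j (x t j) with hgv
  -- pointwise formula for ey
  have key : ∀ s, ey s α = (∑ j, (Pinv * Uᵀ) α j * x s j) - (∑ i, x s i) / N := by
    intro s
    rw [hey, hy, hxbar]
    simp [Matrix.mulVec, dotProduct]
  -- derivative of ey
  have hder : HasDerivAt (fun s => ey s α)
      ((∑ j, (Pinv * Uᵀ) α j * x' t j) - (∑ i, x' t i) / N) t := by
    have h1 : HasDerivAt (fun s => ∑ j, (Pinv * Uᵀ) α j * x s j)
        (∑ j, (Pinv * Uᵀ) α j * x' t j) t :=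
      HasDerivAt.fun_sum fun j _ => (hx t j).const_mul _
    have h2 : HasDerivAt (fun s => (∑ i, x s i) / N) ((∑ i, x' t i) / N) t :=
      (HasDerivAt.fun_sum fun i _ => hx t i).div_const _
    simpa only [key] using h1.fun_sub h2
  -- sum of x'
  have hxsum : ∑ i, x' t i = -(γ t * ∑ i, gv i) := by
    rw [hdyn]
    simp only [Pi.sub_apply, Pi.neg_apply, Pi.smul_apply, smul_eq_mul]
    rw [Finset.sum_sub_distrib, Finset.sum_neg_distrib]
    have : ∑ i, (LI + LE).mulVec (x t) i = 0 := by
      simp only [Matrix.mulVec, dotProduct]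
      rw [Finset.sum_comm]
      refine Finset.sum_eq_zero fun j _ => ?_
      rw [← Finset.sum_mul]
      have : ∑ i, (LI + LE) i j = 0 := by
        simp [Matrix.add_apply, Finset.sum_add_distrib, hcolI j, hcolE j]
      rw [this, zero_mul]
    rw [this, Finset.mul_sum]
    ring_nf
    rfl
  -- mulVec of x'
  have hAx' : (Pinv * Uᵀ).mulVec (x' t)
      = -(Pinv * Uᵀ * LE).mulVec (x t) - γ t • (Pinv * Uᵀ).mulVec gv := by
    rw [hdyn, Matrix.mulVec_sub, Matrix.mulVec_neg, Matrix.mulVec_smul,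
      Matrix.mulVec_mulVec]
    have : Pinv * Uᵀ * (LI + LE) = Pinv * Uᵀ * LE := by
      rw [Matrix.mul_add, Matrix.mul_assoc Pinv, hULI, Matrix.mul_zero, zero_add]
    rw [this]
  -- decomposition of x
  have hU1 : U.mulVec (fun _ => (1:ℝ)) = fun _ => 1 := by
    funext i
    simp [Matrix.mulVec, dotProduct, hU]
  have hxdec : x t = ex t + U.mulVec (ey t) + xbar t • (fun _ => (1:ℝ)) := by
    have hy1 : y t = ey t + xbar t • (fun _ : Fin r => (1:ℝ)) := by
      funext β; simp [hey]
    rw [hex t, hy1, Matrix.mulVec_add, Matrix.mulVec_smul, hU1]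
    abel
  have h4 : (Pinv * Uᵀ * LE).mulVec (x t)
      = (Pinv * Ltilde).mulVec (ey t) + (Pinv * Uᵀ * LE).mulVec (ex t) := by
    rw [hxdec, Matrix.mulVec_add, Matrix.mulVec_add, Matrix.mulVec_smul]
    have hz : (Pinv * Uᵀ * LE).mulVec (fun _ => (1:ℝ)) = 0 := by
      rw [← Matrix.mulVec_mulVec, hLE1, Matrix.mulVec_zero]
    have hLtU : (Pinv * Uᵀ * LE).mulVec (U.mulVec (ey t))
        = (Pinv * Ltilde).mulVec (ey t) := by
      rw [Matrix.mulVec_mulVec, hLt]; simp only [Matrix.mul_assoc]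
    rw [hz, hLtU, smul_zero, add_zero]
    abel
  -- put it together
  have hval : (∑ j, (Pinv * Uᵀ) α j * x' t j) - (∑ i, x' t i) / N
      = (-(Pinv * Ltilde).mulVec (ey t) - (Pinv * Uᵀ * LE).mulVec (ex t)
        - γ t • (Pinv * Uᵀ).mulVec gv
        + (γ t / N * ∑ i, gv i) • (fun _ : Fin r => (1:ℝ))) α := by
    have hA : ∑ j, (Pinv * Uᵀ) α j * x' t j = (Pinv * Uᵀ).mulVec (x' t) α := rfl
    rw [hA, hAx', hxsum, h4]
    simp only [Pi.add_apply, Pi.sub_apply, Pi.neg_apply, Pi.smul_apply, smul_eq_mul]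
    ring
  rw [← hval]
  exact hder
end

section
/- Under the cluster dynamics and assumptions (each ∇f_i bounded by L, W L^E positive semidefinite as used, e^x ⊥ cluster-wise ones vectors), the Lyapunov function V(e^x(t)) = ‖e^x(t)‖ satisfies (whenever e^x(t) ≠ 0) dV(e^x)/dt ≤ -σ_2^I V(e^x) + ‖L^E‖ V(e^y) + L γ(t). -/
open Matrix Finset

/-- Euclidean norm of a vector in `ℝ^n`. -/
noncomputable def eucNorm {n : ℕ} (v : Fin n → ℝ) : ℝ := Real.sqrt (∑ i, v i ^ 2)

/-- Lemma 6: differential inequality for the fast Lyapunov function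
`V(e^x) = ‖e^x‖`.  Under the cluster DCG dynamics, with bounded gradients
(`‖∇F(x)‖ ≤ L`), `W L^E` positive semidefinite, and `σ₂^I = min_α σ₂(L_α)` the minimal
internal spectral gap, whenever `e^x(t) ≠ 0` the derivative satisfies
`dV/dt ≤ -σ₂^I V(e^x) + ‖L^E‖ V(e^y) + L γ(t)`. -/
theorem fast_lyapunov_derivative (N r : ℕ) (hN : 0 < N) (c : Fin N → Fin r)
    (hc : ∀ α, 0 < (univ.filter fun i => c i = α).card)
    (LI LE : Matrix (Fin N) (Fin N) ℝ)
    (U : Matrix (Fin N) (Fin r) ℝ)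
    (hU : ∀ i α, U i α = if c i = α then 1 else 0)
    (hLIU : LI * U = 0)
    (hLE1 : LE.mulVec (fun _ => 1) = 0)
    (W : Matrix (Fin N) (Fin N) ℝ)
    (hW : ∀ i j, W i j = (if i = j then (1 : ℝ) else 0) -
      (if c i = c j then (((univ.filter fun k => c k = c i).card : ℝ))⁻¹ else 0))
    (hPSD : (W * LE).PosSemidef)
    (LEnorm : ℝ) (hLEnorm : ∀ v : Fin N → ℝ, eucNorm (LE.mulVec v) ≤ LEnorm * eucNorm v)
    (σ₂I : ℝ) (hσIpos : 0 < σ₂I)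
    (hσI : ∀ v : Fin N → ℝ, (∀ α, (∑ i ∈ univ.filter fun i => c i = α, v i) = 0) →
      σ₂I * ∑ i, v i ^ 2 ≤ v ⬝ᵥ LI.mulVec v)
    (L : ℝ) (γ : ℝ → ℝ) (hγ : ∀ t, 0 ≤ γ t) (g : Fin N → ℝ → ℝ)
    (hgrad : ∀ v : Fin N → ℝ, eucNorm (fun i => g i (v i)) ≤ L)
    (x x' : ℝ → Fin N → ℝ)
    (hdyn : ∀ t, x' t = -(LI + LE).mulVec (x t) - γ t • fun i => g i (x t i))
    (hx : ∀ t i, HasDerivAt (fun s => x s i) (x' t i) t)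
    (y : ℝ → Fin r → ℝ)
    (hy : ∀ t α, y t α = (∑ i ∈ univ.filter fun i => c i = α, x t i) /
      ((univ.filter fun i => c i = α).card : ℝ))
    (xbar : ℝ → ℝ) (hxbar : ∀ t, xbar t = (∑ i, x t i) / N)
    (ex : ℝ → Fin N → ℝ) (hex : ∀ t i, ex t i = x t i - y t (c i))
    (ey : ℝ → Fin r → ℝ) (hey : ∀ t α, ey t α = y t α - xbar t) :
    ∀ t dV, HasDerivAt (fun s => eucNorm (ex s)) dV t → ex t ≠ 0 →
      dV ≤ -σ₂I * eucNorm (ex t) + LEnorm * eucNorm (ey t) + L * γ t := by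
  classical
  intro t dV hdV hne
  have hcard : ∀ α : Fin r, ((univ.filter fun i => c i = α).card : ℝ) ≠ 0 := by
    intro α; exact_mod_cast (hc α).ne'
  set Q : ℝ := ∑ i, ex t i ^ 2 with hQdef
  have hQ0 : 0 < Q := by
    obtain ⟨i0, hi0⟩ : ∃ i, ex t i ≠ 0 := by
      by_contra h; push_neg at h; exact hne (funext h)
    exact Finset.sum_pos' (fun i _ => sq_nonneg _)
      ⟨i0, mem_univ _, by positivity⟩
  set S : ℝ := Real.sqrt Q with hSdef
  have hS0 : 0 < S := Real.sqrt_pos.2 hQ0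
  have hSQ : S ^ 2 = Q := Real.sq_sqrt hQ0.le
  -- derivative of ex
  set ex' : Fin N → ℝ := fun i =>
    x' t i - (∑ j ∈ univ.filter fun j => c j = c i, x' t j) /
      ((univ.filter fun j => c j = c i).card : ℝ) with hex'def
  have hderiv : ∀ i, HasDerivAt (fun s => ex s i) (ex' i) t := by
    intro i
    have h1 : HasDerivAt (fun s => (∑ j ∈ univ.filter fun j => c j = c i, x s j) /
        ((univ.filter fun j => c j = c i).card : ℝ))
        ((∑ j ∈ univ.filter fun j => c j = c i, x' t j) /
        ((univ.filter fun j => c j = c i).card : ℝ)) t :=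
      (HasDerivAt.fun_sum (fun j _ => hx t j)).div_const _
    have heq : (fun s => ex s i) = fun s =>
        x s i - (∑ j ∈ univ.filter fun j => c j = c i, x s j) /
          ((univ.filter fun j => c j = c i).card : ℝ) := by
      funext s; rw [hex, hy]
    rw [heq]
    exact (hx t i).sub h1
  -- derivative of Q(s)
  have hQd : HasDerivAt (fun s => ∑ i, ex s i ^ 2) (∑ i, 2 * ex t i * ex' i) t := by
    have h := HasDerivAt.fun_sum (u := univ) (fun i _ => (hderiv i).pow 2)
    refine h.congr_deriv ?_
    refine Finset.sum_congr rfl fun i _ => ?_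
    simp [pow_one]
  -- derivative of enorm (ex s)
  have hVd : HasDerivAt (fun s => eucNorm (ex s))
      ((∑ i, 2 * ex t i * ex' i) / (2 * S)) t := by
    have hsq := (Real.hasDerivAt_sqrt hQ0.ne').comp t hQd
    have heq : (Real.sqrt ∘ fun s => ∑ i, ex s i ^ 2) = fun s => eucNorm (ex s) := by
      funext s; simp [eucNorm, Function.comp]
    rw [heq] at hsq
    refine hsq.congr_deriv ?_
    field_simp
    exact mul_comm _ _
  have hdV' : dV = (∑ i, 2 * ex t i * ex' i) / (2 * S) := hdV.unique hVd
  -- cluster sums of ex are zero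
  have hfib : ∀ α, ∑ i ∈ univ.filter fun i => c i = α, ex t i = 0 := by
    intro α
    have h1 : ∑ i ∈ univ.filter fun i => c i = α, ex t i
        = (∑ i ∈ univ.filter fun i => c i = α, x t i) -
          ((univ.filter fun i => c i = α).card : ℝ) * y t α := by
      calc ∑ i ∈ univ.filter fun i => c i = α, ex t i
          = ∑ i ∈ univ.filter fun i => c i = α, (x t i - y t α) := by
            refine Finset.sum_congr rfl fun i hi => ?_
            rw [Finset.mem_filter] at hi
            rw [hex, hi.2]
        _ = _ := by
            rw [Finset.sum_sub_distrib, Finset.sum_const, nsmul_eq_mul]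
    rw [h1, hy, mul_div_cancel₀ _ (hcard α)]
    ring
  -- inner product with ex' equals inner product with x'
  have hP : ∑ i, ex t i * ex' i = ∑ i, ex t i * x' t i := by
    have hz : ∑ i, ex t i * ((∑ j ∈ univ.filter fun j => c j = c i, x' t j) /
        ((univ.filter fun j => c j = c i).card : ℝ)) = 0 := by
      set m : Fin r → ℝ := fun α => (∑ j ∈ univ.filter fun j => c j = α, x' t j) /
        ((univ.filter fun j => c j = α).card : ℝ) with hm
      have h1 : ∑ i, ex t i * ((∑ j ∈ univ.filter fun j => c j = c i, x' t j) /
          ((univ.filter fun j => c j = c i).card : ℝ)) = ∑ i, ex t i * m (c i) := rfl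
      rw [h1, ← Finset.sum_fiberwise univ c (fun i => ex t i * m (c i))]
      refine Finset.sum_eq_zero fun α _ => ?_
      have h2 : ∑ i ∈ univ.filter fun i => c i = α, ex t i * m (c i)
          = (∑ i ∈ univ.filter fun i => c i = α, ex t i) * m α := by
        rw [Finset.sum_mul]
        refine Finset.sum_congr rfl fun i hi => ?_
        rw [Finset.mem_filter] at hi
        rw [hi.2]
      rw [h2, hfib, zero_mul]
    simp only [hex'def, mul_sub]
    rw [Finset.sum_sub_distrib, hz, sub_zero]
  -- decomposition x = ex + U y
  have hUy : ∀ i, (U.mulVec (y t)) i = y t (c i) := by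
    intro i
    simp only [mulVec, dotProduct, hU, ite_mul, one_mul, zero_mul]
    rw [Finset.sum_ite_eq univ (c i) (fun α => y t α)]
    simp
  have hLIx : ex t ⬝ᵥ LI.mulVec (x t) = ex t ⬝ᵥ LI.mulVec (ex t) := by
    have hx_decomp : x t = ex t + U.mulVec (y t) := by
      funext i
      simp only [Pi.add_apply]
      rw [hUy, hex]; ring
    rw [hx_decomp, mulVec_add, mulVec_mulVec, hLIU, zero_mulVec, add_zero]
  have hLI : σ₂I * Q ≤ ex t ⬝ᵥ LI.mulVec (x t) := by
    rw [hLIx]; exact hσI (ex t) hfib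
  -- W projects x onto ex
  have hWx : W.mulVec (x t) = ex t := by
    funext i
    simp only [mulVec, dotProduct, hW, sub_mul, ite_mul, one_mul, zero_mul]
    rw [Finset.sum_sub_distrib]
    have h1 : ∑ j, (if i = j then x t j else 0) = x t i := by
      rw [Finset.sum_ite_eq univ i (fun j => x t j)]; simp
    have h2 : ∑ j, (if c i = c j then
        (((univ.filter fun k => c k = c i).card : ℝ))⁻¹ * x t j else 0)
        = y t (c i) := by
      rw [Finset.sum_ite, Finset.sum_const_zero, add_zero, ← Finset.mul_sum, hy]
      have hset : (univ.filter fun j => c i = c j) = univ.filter fun j => c j = c i := by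
        ext j; simp [eq_comm]
      rw [hset]
      have hset2 : (univ.filter fun j => c j = c i) =
          univ.filter fun j : Fin N => c j = c i := rfl
      rw [inv_mul_eq_div]
    rw [h1, h2, hex]
  have hWsymm : Wᵀ = W := by
    ext i j
    simp only [transpose_apply]
    rw [hW, hW]
    have hone : (if j = i then (1 : ℝ) else 0) = if i = j then 1 else 0 := by
      by_cases hij : i = j
      · rw [if_pos hij, if_pos hij.symm]
      · rw [if_neg hij, if_neg fun hh => hij hh.symm]
    rcases eq_or_ne (c i) (c j) with h | h
    · have hset : (univ.filter fun k => c k = c j) = univ.filter fun k => c k = c i := by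
        ext k; simp [h]
      rw [if_pos h, if_pos h.symm, hset, hone]
    · have h' : ¬ c j = c i := fun hh => h hh.symm
      simp only [h, h', if_false, hone]
  have hLEx : 0 ≤ ex t ⬝ᵥ LE.mulVec (x t) := by
    have h1 := hPSD.dotProduct_mulVec_nonneg (x t)
    have h2 : star (x t) = x t := rfl
    rw [h2] at h1
    have h3 : x t ⬝ᵥ (W * LE).mulVec (x t) = ex t ⬝ᵥ LE.mulVec (x t) := by
      rw [← mulVec_mulVec, dotProduct_mulVec, ← mulVec_transpose, hWsymm, hWx]
    rw [← h3]
    exact h1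
  -- Cauchy–Schwarz for the gradient term
  have hL0 : 0 ≤ L := le_trans (Real.sqrt_nonneg _) (hgrad (x t))
  have hg_norm : eucNorm (fun i => g i (x t i)) ≤ L := hgrad (x t)
  have hCS : |∑ i, ex t i * g i (x t i)| ≤ S * L := by
    have h1 := Finset.sum_mul_sq_le_sq_mul_sq univ (ex t) (fun i => g i (x t i))
    have h2 : |∑ i, ex t i * g i (x t i)|
        = Real.sqrt ((∑ i, ex t i * g i (x t i)) ^ 2) := (Real.sqrt_sq_eq_abs _).symm
    rw [h2]
    calc Real.sqrt ((∑ i, ex t i * g i (x t i)) ^ 2)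
        ≤ Real.sqrt ((∑ i, ex t i ^ 2) * ∑ i, (g i (x t i)) ^ 2) := Real.sqrt_le_sqrt h1
      _ = S * eucNorm (fun i => g i (x t i)) := by
          rw [Real.sqrt_mul (by positivity)]
          rfl
      _ ≤ S * L := by
          exact mul_le_mul_of_nonneg_left hg_norm hS0.le
  -- main estimate on ∑ ex·x'
  have hmain : ∑ i, ex t i * x' t i ≤ -σ₂I * Q + γ t * (S * L) := by
    have hsub : ∑ i, ex t i * x' t i
        = -(ex t ⬝ᵥ LI.mulVec (x t)) - (ex t ⬝ᵥ LE.mulVec (x t))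
          - γ t * ∑ i, ex t i * g i (x t i) := by
      have hx' : x' t = -(LI + LE).mulVec (x t) - γ t • fun i => g i (x t i) := hdyn t
      have hsum : (LI + LE).mulVec (x t) = LI.mulVec (x t) + LE.mulVec (x t) := by
        rw [add_mulVec]
      simp only [hx', hsum, Pi.sub_apply, Pi.neg_apply, Pi.add_apply, Pi.smul_apply,
        smul_eq_mul, dotProduct]
      have hterm : ∀ i, ex t i * (-((LI *ᵥ x t) i + (LE *ᵥ x t) i) - γ t * g i (x t i))
          = -(ex t i * (LI *ᵥ x t) i) - ex t i * (LE *ᵥ x t) i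
            - γ t * (ex t i * g i (x t i)) := fun i => by ring
      rw [Finset.sum_congr rfl fun i _ => hterm i, Finset.sum_sub_distrib,
        Finset.sum_sub_distrib, Finset.sum_neg_distrib, ← Finset.mul_sum]
    rw [hsub]
    have h1 : -(ex t ⬝ᵥ LI.mulVec (x t)) ≤ -(σ₂I * Q) := neg_le_neg hLI
    have h2 : -(ex t ⬝ᵥ LE.mulVec (x t)) ≤ 0 := neg_nonpos.mpr hLEx
    have h3 : -(γ t * ∑ i, ex t i * g i (x t i)) ≤ γ t * (S * L) := by
      have := (abs_le.mp hCS).1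
      calc -(γ t * ∑ i, ex t i * g i (x t i)) = γ t * (-(∑ i, ex t i * g i (x t i))) := by ring
        _ ≤ γ t * (S * L) := by
            refine mul_le_mul_of_nonneg_left ?_ (hγ t)
            linarith
    linarith
  -- LEnorm is nonnegative
  have hLEnorm0 : 0 ≤ LEnorm := by
    have h := hLEnorm (fun j => if j = ⟨0, hN⟩ then 1 else 0)
    have he : eucNorm (fun j : Fin N => if j = ⟨0, hN⟩ then (1 : ℝ) else 0) = 1 := by
      unfold eucNorm
      have : ∑ j, (if j = (⟨0, hN⟩ : Fin N) then (1 : ℝ) else 0) ^ 2 = 1 := by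
        rw [Finset.sum_eq_single (⟨0, hN⟩ : Fin N)]
        · simp
        · intro b _ hb; simp [hb]
        · simp
      rw [this, Real.sqrt_one]
    rw [he, mul_one] at h
    exact le_trans (Real.sqrt_nonneg _) h
  have hey0 : 0 ≤ eucNorm (ey t) := Real.sqrt_nonneg _
  -- final computation
  have hdVval : dV = (∑ i, ex t i * x' t i) / S := by
    rw [hdV', ← hP]
    rw [div_eq_div_iff (by positivity) hS0.ne']
    rw [Finset.sum_mul, Finset.sum_mul]
    refine Finset.sum_congr rfl fun i _ => ?_
    ring
  have henorm_ex : eucNorm (ex t) = S := rfl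
  rw [hdVval, henorm_ex]
  have hfinal : (∑ i, ex t i * x' t i) / S ≤ -σ₂I * S + L * γ t := by
    rw [div_le_iff₀ hS0]
    calc ∑ i, ex t i * x' t i ≤ -σ₂I * Q + γ t * (S * L) := hmain
      _ = (-σ₂I * S + L * γ t) * S := by rw [← hSQ]; ring
  calc (∑ i, ex t i * x' t i) / S ≤ -σ₂I * S + L * γ t := hfinal
    _ ≤ -σ₂I * S + LEnorm * eucNorm (ey t) + L * γ t := by nlinarith
end
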